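/- For every n ∈ ℕ, with m = n(n−1)/2, there exists an injective group homomorphism φ̄ : T*(n,ℝ) → T*(m+n+1,ℝ) such that the bottom-right entry of φ̄(g) equals 1 for every g, and φ̄(g) is essentially hyperbolic for every g ≠ 1. -/

import Mathlib

section Matrices

variable {R : Type*} {n : ℕ}

theorem diag_mul_of_triangular [CommRing R] {A B : Matrix (Fin n) (Fin n) R}
    (hA : A.BlockTriangular id) (hB : B.BlockTriangular id) (i : Fin n) :
    (A * B) i i = A i i * B i i := by
  rw [Matrix.mul_apply]
  apply Finset.sum_eq_single i
  · intro k _ hk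
    rcases lt_or_gt_of_ne hk with h | h
    · rw [hA (show (id : Fin n → Fin n) k < id i from h), zero_mul]
    · rw [hB (show (id : Fin n → Fin n) i < id k from h), mul_zero]
  · intro h; exact absurd (Finset.mem_univ i) h

/-- The group `UT(n,R)` of upper triangular `n × n` matrices over `R` with all diagonal
entries equal to `1`, realised as a subgroup of the group of units of the matrix ring. -/
def UT (n : ℕ) (R : Type*) [CommRing R] : Subgroup (Matrix (Fin n) (Fin n) R)ˣ where
  carrier := {A | (∀ i j : Fin n, j < i → (A : Matrix (Fin n) (Fin n) R) i j = 0) ∧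
    ∀ i : Fin n, (A : Matrix (Fin n) (Fin n) R) i i = 1}
  one_mem' := by
    refine ⟨fun i j hij => ?_, fun i => ?_⟩
    · simp [Matrix.one_apply, (ne_of_lt hij).symm]
    · simp
  mul_mem' := by
    rintro A B ⟨hA1, hA2⟩ ⟨hB1, hB2⟩
    have hA : (A : Matrix (Fin n) (Fin n) R).BlockTriangular id := fun i j h => hA1 i j h
    have hB : (B : Matrix (Fin n) (Fin n) R).BlockTriangular id := fun i j h => hB1 i j h
    refine ⟨fun i j hij => ?_, fun i => ?_⟩
    · exact (hA.mul hB) (show (id : Fin n → Fin n) j < id i from hij)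
    · rw [Units.val_mul, diag_mul_of_triangular hA hB, hA2, hB2, one_mul]
  inv_mem' := by
    rintro A ⟨hA1, hA2⟩
    have hA : (A : Matrix (Fin n) (Fin n) R).BlockTriangular id := fun i j h => hA1 i j h
    haveI := A.invertible
    have hAinv : ((A : Matrix (Fin n) (Fin n) R)⁻¹).BlockTriangular id :=
      Matrix.blockTriangular_inv_of_blockTriangular hA
    have hcoe : ((A⁻¹ : (Matrix (Fin n) (Fin n) R)ˣ) : Matrix (Fin n) (Fin n) R)
        = (A : Matrix (Fin n) (Fin n) R)⁻¹ := Matrix.coe_units_inv A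
    refine ⟨fun i j hij => ?_, fun i => ?_⟩
    · rw [hcoe]; exact hAinv (show (id : Fin n → Fin n) j < id i from hij)
    · have h1 : ((A : Matrix (Fin n) (Fin n) R) * (A : Matrix (Fin n) (Fin n) R)⁻¹) i i = 1 := by
        rw [Matrix.mul_inv_of_invertible]; simp
      rw [diag_mul_of_triangular hA hAinv, hA2, one_mul] at h1
      rw [hcoe, h1]

/-- The group `T*(n,R)` of upper triangular `n × n` matrices over a linearly ordered field `R`
with positive diagonal entries, realised as a subgroup of the units of the matrix ring. -/
def Tstar (n : ℕ) (R : Type*) [Field R] [LinearOrder R] [IsStrictOrderedRing R] : Subgroup (Matrix (Fin n) (Fin n) R)ˣ where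
  carrier := {A | (∀ i j : Fin n, j < i → (A : Matrix (Fin n) (Fin n) R) i j = 0) ∧
    ∀ i : Fin n, 0 < (A : Matrix (Fin n) (Fin n) R) i i}
  one_mem' := by
    refine ⟨fun i j hij => ?_, fun i => ?_⟩
    · simp [Matrix.one_apply, (ne_of_lt hij).symm]
    · simp
  mul_mem' := by
    rintro A B ⟨hA1, hA2⟩ ⟨hB1, hB2⟩
    have hA : (A : Matrix (Fin n) (Fin n) R).BlockTriangular id := fun i j h => hA1 i j h
    have hB : (B : Matrix (Fin n) (Fin n) R).BlockTriangular id := fun i j h => hB1 i j h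
    refine ⟨fun i j hij => ?_, fun i => ?_⟩
    · exact (hA.mul hB) (show (id : Fin n → Fin n) j < id i from hij)
    · rw [Units.val_mul, diag_mul_of_triangular hA hB]
      exact mul_pos (hA2 i) (hB2 i)
  inv_mem' := by
    rintro A ⟨hA1, hA2⟩
    have hA : (A : Matrix (Fin n) (Fin n) R).BlockTriangular id := fun i j h => hA1 i j h
    haveI := A.invertible
    have hAinv : ((A : Matrix (Fin n) (Fin n) R)⁻¹).BlockTriangular id :=
      Matrix.blockTriangular_inv_of_blockTriangular hA
    have hcoe : ((A⁻¹ : (Matrix (Fin n) (Fin n) R)ˣ) : Matrix (Fin n) (Fin n) R)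
        = (A : Matrix (Fin n) (Fin n) R)⁻¹ := Matrix.coe_units_inv A
    refine ⟨fun i j hij => ?_, fun i => ?_⟩
    · rw [hcoe]; exact hAinv (show (id : Fin n → Fin n) j < id i from hij)
    · have h1 : ((A : Matrix (Fin n) (Fin n) R) * (A : Matrix (Fin n) (Fin n) R)⁻¹) i i = 1 := by
        rw [Matrix.mul_inv_of_invertible]; simp
      rw [diag_mul_of_triangular hA hAinv] at h1
      rw [hcoe]
      rcases lt_trichotomy ((A : Matrix (Fin n) (Fin n) R)⁻¹ i i) 0 with h | h | h
      · exact absurd h1 (by nlinarith [hA2 i])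
      · rw [h, mul_zero] at h1; exact absurd h1 zero_ne_one
      · exact h

/-- The last index of `Fin N` (any element of `Fin N` witnesses `0 < N`). -/
def lastOf {N : ℕ} (r : Fin N) : Fin N := ⟨N - 1, Nat.sub_lt r.pos Nat.one_pos⟩

/-- A square matrix `g` (upper triangular, with positive diagonal and bottom-right entry `1`)
is *essentially hyperbolic* if `g ≠ 1` and there is a row index `r` which is not the last row
such that `(g-1)_{r,N} ≠ 0` (where `N` is the last column) and every nonzero entry of `g - 1`
lies either in a row strictly above `r`, or at position `(r, N)`. -/
def EssentiallyHyperbolic {N : ℕ} {R : Type*} [CommRing R]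
    (g : Matrix (Fin N) (Fin N) R) : Prop :=
  g ≠ 1 ∧ ∃ r : Fin N, (r : ℕ) + 1 < N ∧ (g - 1) r (lastOf r) ≠ 0 ∧
    ∀ i j : Fin N, (g - 1) i j ≠ 0 → i < r ∨ (i = r ∧ j = lastOf r)

end Matrices

/-- The multiplicative group structure on `AddAut A` (composition), which older Mathlib
provided as `AddAut.group` and current Mathlib replaced by an additive one. -/
instance AddAut.group {A : Type*} [Add A] : Group (AddAut A) where
  mul g h := AddEquiv.trans h g
  one := AddEquiv.refl _
  inv := AddEquiv.symm
  mul_assoc _ _ _ := rfl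
  one_mul _ := rfl
  mul_one _ := rfl
  inv_mul_cancel := AddEquiv.self_trans_symm

/-- The group of order-preserving additive automorphisms of a linearly ordered abelian
group `Λ`, as a subgroup of `AddAut Λ`. -/
def orderAddAut (Λ : Type*) [AddCommGroup Λ] [LinearOrder Λ] [IsOrderedAddMonoid Λ] : Subgroup (AddAut Λ) where
  carrier := {f | StrictMono f}
  one_mem' := strictMono_id
  mul_mem' := by
    intro f g hf hg a b hab
    exact hf (hg hab)
  inv_mem' := by
    intro f hf a b hab
    show f.symm a < f.symm b
    exact hf.lt_iff_lt.1 (by simpa using hab)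

/-!
For `A ∈ T*(n)` and a row `i`, the entries `A l j / A i i` with `i ≤ l ≤ j` define an affine
map in the coordinates indexed by the pairs `(i, j)`, `i < j`: its linear part is the
transposed corner `(A l j / A i i)` indexed by `j, l > i`, and its translation part is the rest of
row `i` divided by `A i i`. Adding `n` coordinates on which `A` acts by translation by
`log A k k` makes `A` an affine map of an `(m + n)`-dimensional space, that is, an
`(m+n+1) × (m+n+1)` matrix with last row `(0, …, 0, 1)`. This assignment reverses products,
so `g ↦ (matrix of g⁻¹)` is a homomorphism, and it is injective because the translation part
alone recovers `A`. Ordering the pairs by their first index and then backwards by their second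
makes all these matrices upper triangular.

For `g ≠ 1` take `r` to be the last coordinate with nonzero translation. Every other nonzero
entry of `φ̄ g - 1` lies in an earlier row: if some `A k k ≠ 1`, the coordinate of `log A k k`
comes after all pairs and has trivial linear part; if `A` is unipotent, a nonzero entry
`A l j` in row `(i, j)` of the linear part is also the translation of the later pair `(l, j)`.
-/

theorem Fintype.exists_equiv_fin_lt_iff {ι α : Type*} [Fintype ι] [LinearOrder α] {f : ι → α}
    (hf : Function.Injective f) {N : ℕ} (hN : Fintype.card ι = N) :
    ∃ e : ι ≃ Fin N, ∀ x y, e x < e y ↔ f x < f y := by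
  let : LinearOrder ι := LinearOrder.lift' f hf
  exact ⟨(Fintype.orderIsoFinOfCardEq ι hN).symm.toEquiv,
    fun x y => (Fintype.orderIsoFinOfCardEq ι hN).symm.lt_iff_lt⟩

theorem essentiallyHyperbolic_of_lastCol {N : ℕ} {R : Type*} [CommRing R]
    {M : Matrix (Fin (N + 1)) (Fin (N + 1)) R}
    (hlast : (M - 1) (Fin.last N) (Fin.last N) = 0) (hcol : ∃ x, (M - 1) x (Fin.last N) ≠ 0)
    (hrows : ∀ x y, y ≠ Fin.last N → (M - 1) x y ≠ 0 →
      ∃ x', x < x' ∧ (M - 1) x' (Fin.last N) ≠ 0) :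
    EssentiallyHyperbolic M := by
  classical
  obtain ⟨r, hr, hmax⟩ := Finset.exists_max_image
    (Finset.univ.filter fun x => (M - 1) x (Fin.last N) ≠ 0) id
    (hcol.imp fun x hx => Finset.mem_filter.2 ⟨Finset.mem_univ x, hx⟩)
  simp only [Finset.mem_filter, Finset.mem_univ, true_and, id] at hr hmax
  have hlastOf : ∀ x : Fin (N + 1), lastOf x = Fin.last N := fun _ => Fin.ext (by simp [lastOf])
  refine ⟨fun h => hr (by simp [h]), r, ?_, by rwa [hlastOf], fun i j hij => ?_⟩
  · have : r ≠ Fin.last N := by rintro rfl; exact hr hlast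
    simpa using Fin.val_lt_last this
  rw [hlastOf]
  by_cases hj : j = Fin.last N
  · subst hj
    rcases (hmax i hij).lt_or_eq with h | h
    · exact Or.inl h
    · exact Or.inr ⟨h, rfl⟩
  · obtain ⟨x', hix', hx'⟩ := hrows i j hj hij
    exact Or.inl (hix'.trans_le (hmax x' hx'))

namespace Matrix

section Affine

variable {V R : Type*} [CommRing R]

def affine (L : Matrix V V R) (t : V → R) : Matrix (V ⊕ Unit) (V ⊕ Unit) R :=
  fromBlocks L (replicateCol Unit t) 0 1

theorem affine_mul [Fintype V] (L L' : Matrix V V R) (t t' : V → R) :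
    affine L t * affine L' t' = affine (L * L') (L *ᵥ t' + t) := by
  ext (i | i) (j | j) <;> simp [affine, mulVec, mul_apply, dotProduct]

variable [DecidableEq V]

theorem affine_one : affine (1 : Matrix V V R) 0 = 1 := by
  rw [affine, replicateCol_zero, ← fromBlocks_one]

theorem affine_sub_one (L : Matrix V V R) (t : V → R) :
    affine L t - 1 = fromBlocks (L - 1) (replicateCol Unit t) 0 0 := by
  ext (i | i) (j | j) <;> simp [affine, one_apply]

theorem essentiallyHyperbolic_affine_submatrix {N : ℕ} {L : Matrix V V R} {t : V → R}
    (e : V ⊕ Unit ≃ Fin (N + 1)) (he : e (Sum.inr ()) = Fin.last N) (ht : t ≠ 0)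
    (hL : ∀ v w, (L - 1) v w ≠ 0 → ∃ v', e (Sum.inl v) < e (Sum.inl v') ∧ t v' ≠ 0) :
    EssentiallyHyperbolic ((affine L t).submatrix e.symm e.symm) := by
  have hsub : ∀ x y, ((affine L t).submatrix e.symm e.symm - 1) (e x) (e y) =
      fromBlocks (L - 1) (replicateCol Unit t) 0 0 x y := fun x y => by
    rw [← affine_sub_one]
    simp [one_apply]
  refine essentiallyHyperbolic_of_lastCol ?_ ?_ fun x y hy hxy => ?_ <;> rw [← he] at *
  · simp [hsub]
  · obtain ⟨v, hv⟩ := Function.ne_iff.1 ht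
    exact ⟨e (Sum.inl v), by simpa [hsub] using hv⟩
  obtain ⟨x, rfl⟩ := e.surjective x
  obtain ⟨y, rfl⟩ := e.surjective y
  rcases x with v | u <;> rcases y with w | u'
  · obtain ⟨v', hvv', hv'⟩ := hL v w (by simpa [hsub] using hxy)
    exact ⟨e (Sum.inl v'), hvv', by simpa [hsub] using hv'⟩
  · exact absurd rfl hy
  · simp [hsub] at hxy
  · exact absurd rfl hy

end Affine

theorem blockDiagonal'_mulVec_apply {o R : Type*} {m : o → Type*} [Fintype o] [DecidableEq o]
    [∀ i, Fintype (m i)] [CommRing R] (L : ∀ i, Matrix (m i) (m i) R) (v : (Σ i, m i) → R)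
    (i : o) (j : m i) : (blockDiagonal' L *ᵥ v) ⟨i, j⟩ = (L i *ᵥ fun l => v ⟨i, l⟩) j := by
  simp only [mulVec, dotProduct, Fintype.sum_sigma]
  rw [Fintype.sum_eq_single i fun k hk => Finset.sum_eq_zero fun l _ => by
    rw [blockDiagonal'_apply_ne _ _ _ (Ne.symm hk), zero_mul]]
  simp only [blockDiagonal'_apply_eq]

theorem BlockTriangular.fromBlocks_zero₂₁ {m n R α β : Type*} [Zero R] [LT α] [LT β]
    {A : Matrix m m R} {D : Matrix n n R} {b₁ : m → α} {b₂ : n → β}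
    (hA : A.BlockTriangular b₁) (hD : D.BlockTriangular b₂) (B : Matrix m n R) :
    (fromBlocks A B 0 D).BlockTriangular fun x => toLex (Sum.map b₁ b₂ x) := by
  rintro (i | i) (j | j) h
  · exact hA (Sum.Lex.inl_lt_inl_iff.1 h)
  · exact absurd h Sum.Lex.not_inr_lt_inl
  · rfl
  · exact hD (Sum.Lex.inr_lt_inr_iff.1 h)

section UpperTriangular

variable {ι R : Type*} [Fintype ι] [LinearOrder ι] [CommRing R]

theorem BlockTriangular.mul_apply_eq_add_sum_gt {A : Matrix ι ι R} (hA : A.BlockTriangular id)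
    (B : Matrix ι ι R) {i l : ι} (hil : i ≤ l) (j : ι) :
    (A * B) l j = A l i * B i j + ∑ k : {k // i < k}, A l k * B k j := by
  rw [mul_apply, ← Fintype.sum_subtype_add_sum_subtype (fun k => i < k), add_comm]
  congr 1
  refine Fintype.sum_eq_single (⟨i, lt_irrefl i⟩ : {k // ¬i < k}) fun k hk => ?_
  have hki : (k : ι) < i := lt_of_le_of_ne (not_lt.1 k.2) fun h => hk (Subtype.ext h)
  rw [hA (hki.trans_le hil), zero_mul]

theorem BlockTriangular.mul_apply_self {A B : Matrix ι ι R} (hA : A.BlockTriangular id)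
    (hB : B.BlockTriangular id) (i : ι) : (A * B) i i = A i i * B i i := by
  rw [hA.mul_apply_eq_add_sum_gt B le_rfl, add_eq_left]
  exact Finset.sum_eq_zero fun k _ => by rw [hB k.2, mul_zero]

end UpperTriangular

section Blocks

variable {ι K : Type*} [LinearOrder ι] [Field K]

def blockLinear (A : Matrix ι ι K) (i : ι) : Matrix {j // i < j} {j // i < j} K :=
  of fun j l => A l j / A i i

def blockTranslation (A : Matrix ι ι K) (i : ι) : {j // i < j} → K :=
  fun j => A i j / A i i

variable [Fintype ι] {A B : Matrix ι ι K} (hA : A.BlockTriangular id) (hB : B.BlockTriangular id)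
  {i : ι}
include hA hB

theorem blockLinear_mul : blockLinear (A * B) i = blockLinear B i * blockLinear A i := by
  ext j l
  have hAB := hA.mul_apply_eq_add_sum_gt B l.2.le j
  rw [hA l.2, zero_mul, zero_add] at hAB
  rw [mul_apply]
  simp only [blockLinear, of_apply, hAB, hA.mul_apply_self hB, Finset.sum_div]
  exact Finset.sum_congr rfl fun k _ => by ring

theorem blockTranslation_mul (hAi : A i i ≠ 0) :
    blockTranslation (A * B) i =
      blockLinear B i *ᵥ blockTranslation A i + blockTranslation B i := by
  ext j
  simp only [blockLinear, blockTranslation, mulVec, dotProduct, of_apply, Pi.add_apply,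
    hA.mul_apply_self hB, hA.mul_apply_eq_add_sum_gt B le_rfl j, add_div, Finset.sum_div]
  rw [add_comm]
  congr 1
  · exact Finset.sum_congr rfl fun k _ => by ring
  · field_simp

end Blocks

section AffineRep

variable {ι : Type*} [LinearOrder ι]

abbrev PairIndex (ι : Type*) [LinearOrder ι] := Σ i : ι, {j : ι // i < j}

abbrev AffineIndex (ι : Type*) [LinearOrder ι] := (PairIndex ι ⊕ ι) ⊕ Unit

def linearPart {K : Type*} [Field K] (A : Matrix ι ι K) :
    Matrix (PairIndex ι ⊕ ι) (PairIndex ι ⊕ ι) K :=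
  fromBlocks (blockDiagonal' (blockLinear A)) 0 0 1

noncomputable def translationPart (A : Matrix ι ι ℝ) : PairIndex ι ⊕ ι → ℝ :=
  Sum.elim (fun p => blockTranslation A p.1 p.2) fun k => Real.log (A k k)

noncomputable def affineRep (A : Matrix ι ι ℝ) : Matrix (AffineIndex ι) (AffineIndex ι) ℝ :=
  affine (linearPart A) (translationPart A)

theorem translationPart_one : translationPart (1 : Matrix ι ι ℝ) = 0 := by
  ext (⟨i, j⟩ | k)
  · simp [translationPart, blockTranslation, one_apply_ne j.2.ne]
  · simp [translationPart]

theorem affineRep_one : affineRep (1 : Matrix ι ι ℝ) = 1 := by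
  have hlin : ∀ i : ι, blockLinear (1 : Matrix ι ι ℝ) i = 1 := fun i => by
    ext j l; simp [blockLinear, one_apply, Subtype.ext_iff, eq_comm]
  rw [affineRep, linearPart, translationPart_one, funext hlin, ← Pi.one_def, blockDiagonal'_one,
    fromBlocks_one, affine_one]

theorem eq_of_translationPart_eq {A B : Matrix ι ι ℝ} (hA : A.BlockTriangular id)
    (hB : B.BlockTriangular id) (hApos : ∀ i, 0 < A i i) (hBpos : ∀ i, 0 < B i i)
    (h : translationPart A = translationPart B) : A = B := by
  have hd : ∀ k, A k k = B k k := fun k =>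
    Real.log_injOn_pos (hApos k) (hBpos k) (congrFun h (Sum.inr k))
  ext i j
  rcases lt_trichotomy i j with hij | rfl | hij
  · have := congrFun h (Sum.inl ⟨i, ⟨j, hij⟩⟩)
    simpa [translationPart, blockTranslation, hd i, div_left_inj' (hBpos i).ne'] using this
  · exact hd i
  · rw [hA hij, hB hij]

theorem eq_of_affineRep_eq {A B : Matrix ι ι ℝ} (hA : A.BlockTriangular id)
    (hB : B.BlockTriangular id) (hApos : ∀ i, 0 < A i i) (hBpos : ∀ i, 0 < B i i)
    (h : affineRep A = affineRep B) : A = B :=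
  eq_of_translationPart_eq hA hB hApos hBpos <| funext fun v => by
    simpa [affineRep, affine] using congrFun₂ h (Sum.inl v) (Sum.inr ())

variable [Fintype ι]

theorem affineRep_mul {A B : Matrix ι ι ℝ} (hA : A.BlockTriangular id) (hB : B.BlockTriangular id)
    (hAd : ∀ i, A i i ≠ 0) (hBd : ∀ i, B i i ≠ 0) :
    affineRep (A * B) = affineRep B * affineRep A := by
  rw [affineRep, affineRep, affineRep, affine_mul]
  congr 1
  · have hL : blockLinear (A * B) = fun i => blockLinear B i * blockLinear A i :=
      funext fun i => blockLinear_mul hA hB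
    simp [linearPart, fromBlocks_multiply, hL, blockDiagonal'_mul]
  · ext (⟨i, j⟩ | k)
    · simp [translationPart, linearPart, fromBlocks_mulVec, blockDiagonal'_mulVec_apply,
        blockTranslation_mul hA hB (hAd i)]
    · simp [translationPart, linearPart, fromBlocks_mulVec, hA.mul_apply_self hB,
        Real.log_mul (hAd k) (hBd k), add_comm]

end AffineRep

section Order

variable {ι : Type*} [LinearOrder ι]

def pairKey (p : PairIndex ι) : ι ×ₗ ιᵒᵈ := toLex (p.1, OrderDual.toDual (p.2 : ι))

def linearKey (v : PairIndex ι ⊕ ι) : (ι ×ₗ ιᵒᵈ) ⊕ₗ ι := toLex (Sum.map pairKey id v)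

def affineKey (x : AffineIndex ι) : ((ι ×ₗ ιᵒᵈ) ⊕ₗ ι) ⊕ₗ Unit := toLex (Sum.map linearKey id x)

theorem affineKey_injective : Function.Injective (affineKey (ι := ι)) := by
  have hpair : Function.Injective (pairKey (ι := ι)) := by
    rintro ⟨i, j⟩ ⟨i', j'⟩ h
    simp only [pairKey, toLex_inj, Prod.mk.injEq, OrderDual.toDual_inj] at h
    obtain ⟨rfl, h⟩ := h
    rw [Subtype.ext h]
  exact toLex.injective.comp <| Sum.map_injective.2
    ⟨toLex.injective.comp <| Sum.map_injective.2 ⟨hpair, Function.injective_id⟩,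
      Function.injective_id⟩

theorem affineKey_le_affineKey_inr (x : AffineIndex ι) : affineKey x ≤ affineKey (Sum.inr ()) := by
  rcases x with v | u
  · exact (Sum.Lex.inl_lt_inr _ _).le
  · rfl

theorem blockTriangular_affineRep {A : Matrix ι ι ℝ} (hA : A.BlockTriangular id) :
    (affineRep A).BlockTriangular affineKey := by
  have hblocks : (blockDiagonal' (blockLinear A)).BlockTriangular pairKey := by
    rintro ⟨i, j⟩ ⟨i', l⟩ h
    obtain rfl | hi := eq_or_ne i i'
    · have hjl : (j : ι) < l := by simpa [pairKey, Prod.Lex.toLex_lt_toLex] using h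
      rw [blockDiagonal'_apply_eq, blockLinear, of_apply, hA hjl, zero_div]
    · exact blockDiagonal'_apply_ne _ _ _ hi
  exact (hblocks.fromBlocks_zero₂₁ blockTriangular_one 0).fromBlocks_zero₂₁ blockTriangular_one _

theorem affineRep_diag_pos {A : Matrix ι ι ℝ} (hA : ∀ i, 0 < A i i) (x : AffineIndex ι) :
    0 < affineRep A x x := by
  rcases x with (⟨i, j⟩ | k) | u
  · simpa [affineRep, affine, linearPart, blockLinear] using div_pos (hA j) (hA i)
  · simp [affineRep, affine, linearPart]
  · simp [affineRep, affine]

theorem exists_linearKey_lt_translationPart_ne_zero {A : Matrix ι ι ℝ}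
    (hA : A.BlockTriangular id) (hApos : ∀ i, 0 < A i i) {v w : PairIndex ι ⊕ ι}
    (h : (linearPart A - 1) v w ≠ 0) :
    ∃ v', linearKey v < linearKey v' ∧ translationPart A v' ≠ 0 := by
  rcases v with ⟨i, j⟩ | k <;> rcases w with ⟨i', l⟩ | k'
  · obtain rfl | hii' := eq_or_ne i i'
    swap
    · simp [linearPart, blockDiagonal'_apply_ne _ _ _ hii', hii'] at h
    by_cases hdiag : ∀ k, A k k = 1
    swap
    · obtain ⟨k, hk⟩ := not_forall.1 hdiag
      exact ⟨Sum.inr k, Sum.Lex.inl_lt_inr _ _,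
        by simpa [translationPart] using Real.log_ne_zero_of_pos_of_ne_one (hApos k) hk⟩
    simp only [linearPart, sub_apply, fromBlocks_apply₁₁, blockDiagonal'_apply_eq, blockLinear,
      of_apply, hdiag, div_one, one_apply, Sum.inl.injEq, Sigma.mk.injEq, heq_eq_eq, true_and] at h
    have hlj : (l : ι) ≠ j := fun hlj => h (by simp [Subtype.ext hlj, hdiag])
    have hA_lj : A l j ≠ 0 := fun h0 => h (by simp [h0, Ne.symm (Subtype.ext_iff.not.2 hlj)])
    have hlt : (l : ι) < j := lt_of_le_of_ne (not_lt.1 fun h' => hA_lj (hA h')) hlj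
    refine ⟨Sum.inl ⟨l, ⟨j, hlt⟩⟩, ?_, ?_⟩
    · simp [linearKey, pairKey, Prod.Lex.toLex_lt_toLex, l.2]
    · simpa [translationPart, blockTranslation, hdiag] using hA_lj
  all_goals simp [linearPart, one_apply] at h

end Order

theorem card_affineIndex_fin (n : ℕ) :
    Fintype.card (AffineIndex (Fin n)) = n * (n - 1) / 2 + n + 1 := by
  have hpairs : Fintype.card (PairIndex (Fin n)) = n * (n - 1) / 2 := by
    simp only [Fintype.card_sigma, Fintype.card_subtype, Finset.filter_lt_eq_Ioi, Fin.card_Ioi]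
    rw [Fin.sum_univ_eq_sum_range (fun i => n - 1 - i)]
    exact (Finset.sum_range_reflect id n).trans (Finset.sum_range_id n)
  simp [hpairs]


end Matrix

namespace Tstar

variable {n N : ℕ} {R : Type*} [Field R] [LinearOrder R] [IsStrictOrderedRing R]

theorem blockTriangular (g : Tstar n R) :
    ((g : (Matrix (Fin n) (Fin n) R)ˣ) : Matrix (Fin n) (Fin n) R).BlockTriangular id :=
  fun i j h => g.2.1 i j h

theorem diag_pos (g : Tstar n R) (i : Fin n) :
    0 < ((g : (Matrix (Fin n) (Fin n) R)ˣ) : Matrix (Fin n) (Fin n) R) i i :=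
  g.2.2 i

variable {G ι : Type*} [Group G] [Fintype ι] [DecidableEq ι]

def codRestrictOfBlockTriangular (ρ : G →* Matrix ι ι R) (e : ι ≃ Fin N)
    (htri : ∀ g, (ρ g).BlockTriangular e) (hpos : ∀ g x, 0 < ρ g x x) : G →* Tstar N R :=
  ((Units.map (Matrix.reindexAlgEquiv R R e).toMonoidHom).comp ρ.toHomUnits).codRestrict _
    fun g => ⟨fun i j hji => htri g (by simpa using hji), fun i => hpos g _⟩

theorem codRestrictOfBlockTriangular_apply (ρ : G →* Matrix ι ι R) (e : ι ≃ Fin N)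
    (htri : ∀ g, (ρ g).BlockTriangular e) (hpos : ∀ g x, 0 < ρ g x x) (g : G) :
    ((codRestrictOfBlockTriangular ρ e htri hpos g : (Matrix (Fin N) (Fin N) R)ˣ) :
      Matrix (Fin N) (Fin N) R) = (ρ g).submatrix e.symm e.symm :=
  rfl

theorem codRestrictOfBlockTriangular_injective (ρ : G →* Matrix ι ι R) (e : ι ≃ Fin N)
    (htri : ∀ g, (ρ g).BlockTriangular e) (hpos : ∀ g x, 0 < ρ g x x)
    (hρ : Function.Injective ρ) : Function.Injective (codRestrictOfBlockTriangular ρ e htri hpos) :=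
  fun g h hgh => hρ <| Matrix.ext fun x y => by
    simpa [codRestrictOfBlockTriangular_apply] using
      congrFun₂ (congrArg (fun g : Tstar N R =>
        ((g : (Matrix (Fin N) (Fin N) R)ˣ) : Matrix (Fin N) (Fin N) R)) hgh) (e x) (e y)

open Matrix

variable (n) in
noncomputable def affineRepHom :
    Tstar n ℝ →* Matrix (AffineIndex (Fin n)) (AffineIndex (Fin n)) ℝ where
  toFun g :=
    affineRep (((g⁻¹ : Tstar n ℝ) : (Matrix (Fin n) (Fin n) ℝ)ˣ) : Matrix (Fin n) (Fin n) ℝ)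
  map_one' := by simp [affineRep_one]
  map_mul' g h := by
    rw [_root_.mul_inv_rev, Subgroup.coe_mul, Units.val_mul,
      affineRep_mul (blockTriangular h⁻¹) (blockTriangular g⁻¹) (fun i => (diag_pos h⁻¹ i).ne')
        (fun i => (diag_pos g⁻¹ i).ne')]

theorem translationPart_ne_zero {g : Tstar n ℝ} (hg : g ≠ 1) :
    translationPart ((g : (Matrix (Fin n) (Fin n) ℝ)ˣ) : Matrix (Fin n) (Fin n) ℝ) ≠ 0 :=
  fun h0 => hg <| Subtype.ext <| Units.ext <| eq_of_translationPart_eq (blockTriangular g)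
    blockTriangular_one (diag_pos g) (fun _ => by simp) (h0.trans translationPart_one.symm)

theorem affineRepHom_injective : Function.Injective (affineRepHom n) := fun g h hgh =>
  inv_injective <| Subtype.ext <| Units.ext <| eq_of_affineRep_eq (blockTriangular g⁻¹)
    (blockTriangular h⁻¹) (diag_pos g⁻¹) (diag_pos h⁻¹) hgh

end Tstar

/-- For `m = n(n-1)/2` there is an injective group homomorphism
`φ : T*(n,ℝ) → T*(m+n+1,ℝ)` such that each `φ g` has bottom-right entry `1` and `φ g` is
essentially hyperbolic for every `g ≠ 1`. -/
theorem Tstar_embeds_essentiallyHyperbolically (n : ℕ) :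
    ∃ φ : Tstar n ℝ →* Tstar (n * (n - 1) / 2 + n + 1) ℝ,
      Function.Injective φ ∧
      (∀ g : Tstar n ℝ,
        (((φ g : Tstar (n * (n - 1) / 2 + n + 1) ℝ) :
            (Matrix (Fin (n * (n - 1) / 2 + n + 1)) (Fin (n * (n - 1) / 2 + n + 1)) ℝ)ˣ) :
          Matrix (Fin (n * (n - 1) / 2 + n + 1)) (Fin (n * (n - 1) / 2 + n + 1)) ℝ)
          (Fin.last (n * (n - 1) / 2 + n)) (Fin.last (n * (n - 1) / 2 + n)) = 1) ∧
      ∀ g : Tstar n ℝ, g ≠ 1 →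
        EssentiallyHyperbolic
          (((φ g : Tstar (n * (n - 1) / 2 + n + 1) ℝ) :
              (Matrix (Fin (n * (n - 1) / 2 + n + 1)) (Fin (n * (n - 1) / 2 + n + 1)) ℝ)ˣ) :
            Matrix (Fin (n * (n - 1) / 2 + n + 1)) (Fin (n * (n - 1) / 2 + n + 1)) ℝ) := by
  obtain ⟨e, he⟩ :=
    Fintype.exists_equiv_fin_lt_iff Matrix.affineKey_injective (Matrix.card_affineIndex_fin n)
  have hlast : e (Sum.inr ()) = Fin.last _ := by
    refine le_antisymm (Fin.le_last _) (not_lt.1 fun h => ?_)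
    rw [← e.apply_symm_apply (Fin.last _), he] at h
    exact not_lt_of_ge (Matrix.affineKey_le_affineKey_inr _) h
  let φ := Tstar.codRestrictOfBlockTriangular (Tstar.affineRepHom n) e
    (fun g i j h => Matrix.blockTriangular_affineRep (Tstar.blockTriangular g⁻¹) ((he j i).1 h))
    (fun g => Matrix.affineRep_diag_pos (Tstar.diag_pos g⁻¹))
  refine ⟨φ, Tstar.codRestrictOfBlockTriangular_injective _ _ _ _ Tstar.affineRepHom_injective,
    fun g => ?_, fun g hg => ?_⟩
  · simp [φ, Tstar.codRestrictOfBlockTriangular_apply, ← hlast, Tstar.affineRepHom,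
      Matrix.affineRep, Matrix.affine]
  refine Matrix.essentiallyHyperbolic_affine_submatrix e hlast
    (Tstar.translationPart_ne_zero (inv_ne_one.2 hg)) fun v w h => ?_
  obtain ⟨v', hlt, hv'⟩ := Matrix.exists_linearKey_lt_translationPart_ne_zero
    (Tstar.blockTriangular g⁻¹) (Tstar.diag_pos g⁻¹) h
  exact ⟨v', (he _ _).2 (Sum.Lex.inl_lt_inl_iff.2 hlt), hv'⟩
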